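/- arXiv:1907.02218 — 4 statements merged into one kernel-verified Lean document; each statement's English description precedes it below -/
import Mathlib

section
/- Let S = S₁ + ... + S_r where S₁,...,S_r are independent random variables each taking values in [0, T], with v = E[S]. Let X be distributed as Exp(S) conditioned on S (the minimum of independent Exp(S_i)'s). Then for all τ ≥ 0, Pr[X ≤ τ] ≥ 1 - exp(-(v/T)·(1 - e^{-Tτ})). -/
/-!
Given `S`, the variable `X` is exponential, so `Pr[X ≤ τ] = 1 - E[e^{-Sτ}]`, and by
independence `E[e^{-Sτ}] = ∏ E[e^{-Sᵢτ}]`. On `[0, T]` the convex function `x ↦ e^{-xτ}` lies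
below its chord, so `E[e^{-Sᵢτ}] ≤ 1 - (E[Sᵢ]/T)(1 - e^{-Tτ}) ≤ exp(-(E[Sᵢ]/T)(1 - e^{-Tτ}))`,
and these bounds multiply to `exp(-(v/T)(1 - e^{-Tτ}))`.
-/

open MeasureTheory ProbabilityTheory Real Set

lemma exp_neg_mul_le_chord {T x : ℝ} (τ : ℝ) (hT : 0 < T) (hx : x ∈ Icc 0 T) :
    exp (-(x * τ)) ≤ 1 - x / T * (1 - exp (-(T * τ))) := by
  have hconv := convexOn_exp.2 (mem_univ 0) (mem_univ (-(T * τ)))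
    (sub_nonneg.2 ((div_le_one hT).2 hx.2)) (div_nonneg hx.1 hT.le) (sub_add_cancel 1 (x / T))
  have harg : x / T * -(T * τ) = -(x * τ) := by field_simp
  simp only [smul_eq_mul, mul_zero, zero_add, harg, exp_zero] at hconv
  linarith

section

variable {Ω : Type*} [MeasurableSpace Ω] {μ : Measure Ω}

lemma integral_exp_neg_mul_le [IsProbabilityMeasure μ] {X : Ω → ℝ} {T : ℝ} (τ : ℝ)
    (hT : 0 < T) (hX : Integrable X μ) (hXT : ∀ᵐ ω ∂μ, X ω ∈ Icc 0 T) :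
    ∫ ω, exp (-(X ω * τ)) ∂μ ≤ exp (-(μ[X] / T * (1 - exp (-(T * τ))))) := by
  set c := 1 - exp (-(T * τ))
  have hchord : Integrable (fun ω ↦ 1 - X ω / T * c) μ :=
    (integrable_const 1).sub ((hX.div_const T).mul_const c)
  calc ∫ ω, exp (-(X ω * τ)) ∂μ ≤ ∫ ω, (1 - X ω / T * c) ∂μ :=
        integral_mono_of_nonneg (ae_of_all _ fun _ ↦ (exp_pos _).le) hchord
          (hXT.mono fun _ hx ↦ exp_neg_mul_le_chord τ hT hx)
    _ = 1 - μ[X] / T * c := by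
        rw [integral_sub (integrable_const 1) ((hX.div_const T).mul_const c), integral_const,
          probReal_univ, one_smul, integral_mul_const, integral_div]
    _ ≤ exp (-(μ[X] / T * c)) := by linarith [add_one_le_exp (-(μ[X] / T * c))]

lemma ProbabilityTheory.iIndepFun.integral_exp_neg_sum_mul {ι : Type*} [Fintype ι]
    {S : ι → Ω → ℝ} (hindep : iIndepFun S μ) (hS : ∀ i, AEMeasurable (S i) μ) (τ : ℝ) :
    ∫ ω, exp (-((∑ i, S i ω) * τ)) ∂μ = ∏ i, ∫ ω, exp (-(S i ω * τ)) ∂μ := by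
  simp only [Finset.sum_mul, ← Finset.sum_neg_distrib, exp_sum]
  exact hindep.integral_fun_prod_comp (f := fun _ x ↦ exp (-(x * τ))) hS fun _ ↦ by
    fun_prop

end

/-- If `S = S₁ + ⋯ + S_r` is a sum of independent random variables in `[0, T]` with
`v = E[S]`, and `X ~ Exp(S)` conditionally on `S` (the minimum of independent `Exp(Sᵢ)`'s,
`Exp(0) = ∞`), so that `Pr[X ≤ τ] = E[1 - e^{-Sτ}]`, then
`Pr[X ≤ τ] ≥ 1 - exp(-(v/T)·(1 - e^{-Tτ}))`. -/
theorem sum_stochastic_seed_cdf_lower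
    {Ω : Type*} [MeasureSpace Ω] [IsProbabilityMeasure (ℙ : Measure Ω)]
    (T v : ℝ) (hT : 0 < T)
    (r : ℕ) (S : Fin r → Ω → ℝ)
    (hindep : ProbabilityTheory.iIndepFun S ℙ)
    (hmeas : ∀ i, Measurable (S i))
    (hS0 : ∀ i ω, 0 ≤ S i ω) (hST : ∀ i ω, S i ω ≤ T)
    (hv : ∫ ω, (∑ i, S i ω) = v)
    (τ : ℝ) (hτ : 0 ≤ τ) :
    ∫ ω, (1 - Real.exp (-((∑ i, S i ω) * τ)))
      ≥ 1 - Real.exp (-(v / T * (1 - Real.exp (-(T * τ))))) := by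
  set c := 1 - exp (-(T * τ))
  have hSint i : Integrable (S i) :=
    .of_mem_Icc 0 T (hmeas i).aemeasurable (ae_of_all _ fun ω ↦ ⟨hS0 i ω, hST i ω⟩)
  have hexp_int : Integrable fun ω ↦ exp (-((∑ i, S i ω) * τ)) := by
    refine .of_mem_Icc 0 1 (by fun_prop) (ae_of_all _ fun ω ↦ ⟨(exp_pos _).le, ?_⟩)
    have : 0 ≤ ∑ i, S i ω := Finset.sum_nonneg fun i _ ↦ hS0 i ω
    exact exp_le_one_iff.2 (by nlinarith)
  have hmean : ∑ i, ∫ ω, S i ω = v := by rw [← hv, integral_finsetSum _ fun i _ ↦ hSint i]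
  calc 1 - exp (-(v / T * c)) = 1 - ∏ i, exp (-((∫ ω, S i ω) / T * c)) := by
        rw [← exp_sum, ← hmean, Finset.sum_div, Finset.sum_mul, Finset.sum_neg_distrib]
    _ ≤ 1 - ∏ i, ∫ ω, exp (-(S i ω * τ)) :=
        sub_le_sub_left (Finset.prod_le_prod (fun i _ ↦ integral_nonneg fun _ ↦ (exp_pos _).le)
          fun i _ ↦ integral_exp_neg_mul_le τ hT (hSint i)
            (ae_of_all _ fun ω ↦ ⟨hS0 i ω, hST i ω⟩)) 1
    _ = ∫ ω, (1 - exp (-((∑ i, S i ω) * τ))) := by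
        rw [integral_sub (integrable_const 1) hexp_int, integral_const, probReal_univ, one_smul,
          hindep.integral_exp_neg_sum_mul fun i ↦ (hmeas i).aemeasurable]
end

section
/- Let S = S₁ + ... + S_r where S₁,...,S_r are independent random variables in [0, T], with v = E[S]. Let X ~ Exp(S) (conditionally on S). Then for all τ ≥ 0, Pr[X ≤ τ] ≥ 1 - e^{-vτ(1 - τT/2)}. -/
open MeasureTheory
open scoped ProbabilityTheory

/-! For a single variable `X ∈ [0, T]`, the second-order bound `e^{-y} ≤ 1 - y + y²/2` with
`y = τX ≤ τT` gives `E[e^{-τX}] ≤ 1 - τ E[X] (1 - τT/2) ≤ e^{-τ E[X] (1 - τT/2)}`.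
By independence the moment generating function of the sum is the product of those of the
summands, so the exponents add up to `-τ v (1 - τT/2)`. -/

open Real

lemma Real.exp_neg_le_one_sub_add_sq_div_two {y : ℝ} (hy : 0 ≤ y) :
    exp (-y) ≤ 1 - y + y ^ 2 / 2 := by
  have h_exp : 1 + y + y ^ 2 / 2 ≤ exp y := quadratic_le_exp_of_nonneg hy
  have h_inv : exp (-y) * exp y = 1 := by rw [← exp_add, neg_add_cancel, exp_zero]
  nlinarith [exp_pos (-y), sq_nonneg y, sq_nonneg (y ^ 2)]

lemma Real.exp_neg_mul_le_one_sub_mul {x T τ : ℝ} (hx : x ∈ Set.Icc 0 T) (hτ : 0 ≤ τ) :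
    exp (-(x * τ)) ≤ 1 - x * τ * (1 - τ * T / 2) := by
  have hxτ : 0 ≤ x * τ := mul_nonneg hx.1 hτ
  have hsq : (x * τ) ^ 2 ≤ x * τ * (τ * T) := by
    nlinarith [mul_le_mul_of_nonneg_left hx.2 (mul_nonneg hxτ hτ)]
  linarith [exp_neg_le_one_sub_add_sq_div_two hxτ]

namespace ProbabilityTheory

variable {Ω : Type*} {m : MeasurableSpace Ω} {μ : Measure Ω} {T τ : ℝ}

lemma mgf_neg_le_exp_of_mem_Icc [IsProbabilityMeasure μ] {X : Ω → ℝ} (hX : AEMeasurable X μ)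
    (hb : ∀ᵐ ω ∂μ, X ω ∈ Set.Icc 0 T) (hτ : 0 ≤ τ) :
    mgf X μ (-τ) ≤ exp (-(μ[X] * τ * (1 - τ * T / 2))) := by
  have hX_int : Integrable X μ := .of_mem_Icc 0 T hX hb
  have h_pointwise : mgf X μ (-τ) ≤ ∫ ω, (1 - X ω * τ * (1 - τ * T / 2)) ∂μ := by
    refine integral_mono_ae (integrable_exp_mul_of_mem_Icc hX hb)
      ((integrable_const 1).sub ((hX_int.mul_const τ).mul_const _)) ?_
    filter_upwards [hb] with ω hω
    simpa [neg_mul, mul_comm τ] using exp_neg_mul_le_one_sub_mul hω hτ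
  rw [integral_sub (integrable_const 1) ((hX_int.mul_const τ).mul_const _), integral_const,
    integral_mul_const, integral_mul_const] at h_pointwise
  simp only [probReal_univ, smul_eq_mul, one_mul] at h_pointwise
  linarith [add_one_le_exp (-(μ[X] * τ * (1 - τ * T / 2)))]

lemma iIndepFun.mgf_sum_neg_le_exp {ι : Type*} [Fintype ι] {X : ι → Ω → ℝ}
    (h_indep : iIndepFun X μ) (hX : ∀ i, AEMeasurable (X i) μ)
    (hb : ∀ i, ∀ᵐ ω ∂μ, X i ω ∈ Set.Icc 0 T) (hτ : 0 ≤ τ) :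
    mgf (∑ i, X i) μ (-τ) ≤ exp (-(μ[∑ i, X i] * τ * (1 - τ * T / 2))) := by
  have := h_indep.isProbabilityMeasure
  have h_mean : μ[∑ i, X i] = ∑ i, μ[X i] := by
    simp only [Finset.sum_apply]
    exact integral_finsetSum _ fun i _ => .of_mem_Icc 0 T (hX i) (hb i)
  calc mgf (∑ i, X i) μ (-τ) = ∏ i, mgf (X i) μ (-τ) := h_indep.mgf_sum₀ hX _
    _ ≤ ∏ i, exp (-(μ[X i] * τ * (1 - τ * T / 2))) :=
      Finset.prod_le_prod (fun _ _ => mgf_nonneg) fun i _ =>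
        mgf_neg_le_exp_of_mem_Icc (hX i) (hb i) hτ
    _ = exp (-(μ[∑ i, X i] * τ * (1 - τ * T / 2))) := by
      rw [← exp_sum, h_mean, Finset.sum_mul, Finset.sum_mul, Finset.sum_neg_distrib]

lemma integral_one_sub_exp_neg_mul [IsProbabilityMeasure μ] {Y : Ω → ℝ}
    (hY : AEMeasurable Y μ) (h0 : ∀ᵐ ω ∂μ, 0 ≤ Y ω) (hτ : 0 ≤ τ) :
    ∫ ω, (1 - exp (-(Y ω * τ))) ∂μ = 1 - mgf Y μ (-τ) := by
  have h_int : Integrable (fun ω => exp (-(Y ω * τ))) μ := by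
    refine .of_mem_Icc 0 1 (by fun_prop) ?_
    filter_upwards [h0] with ω hω
    exact ⟨(exp_pos _).le, exp_le_one_iff.mpr (by nlinarith)⟩
  rw [integral_sub (integrable_const 1) h_int, integral_const, mgf]
  simp [neg_mul, mul_comm τ]

end ProbabilityTheory

theorem sum_stochastic_seed_cdf_lower'_general
    {Ω : Type*} [MeasureSpace Ω] [IsProbabilityMeasure (ℙ : Measure Ω)]
    (T v : ℝ)
    (r : ℕ) (S : Fin r → Ω → ℝ)
    (hindep : ProbabilityTheory.iIndepFun S ℙ)
    (hmeas : ∀ i, Measurable (S i))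
    (hS0 : ∀ i ω, 0 ≤ S i ω) (hST : ∀ i ω, S i ω ≤ T)
    (hv : ∫ ω, (∑ i, S i ω) = v)
    (τ : ℝ) (hτ : 0 ≤ τ) :
    ∫ ω, (1 - Real.exp (-((∑ i, S i ω) * τ)))
      ≥ 1 - Real.exp (-(v * τ * (1 - τ * T / 2))) := by
  have h_mgf := hindep.mgf_sum_neg_le_exp (fun i => (hmeas i).aemeasurable)
    (fun i => ae_of_all _ fun ω => ⟨hS0 i ω, hST i ω⟩) hτ
  have h_sum_nonneg : ∀ᵐ ω ∂ℙ, 0 ≤ (∑ i, S i) ω :=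
    ae_of_all _ fun ω => by
      simpa only [Finset.sum_apply] using Finset.sum_nonneg fun i _ => hS0 i ω
  have h_cdf := ProbabilityTheory.integral_one_sub_exp_neg_mul (by fun_prop) h_sum_nonneg hτ
  simp only [Finset.sum_apply] at h_cdf h_mgf
  rw [hv] at h_mgf
  rw [ge_iff_le, h_cdf]
  linarith

/-- If `S = S₁ + ⋯ + S_r` is a sum of independent random variables in `[0, T]` with
`v = E[S]`, and `X ~ Exp(S)` conditionally on `S` (with `Exp(0) = ∞`), so that
`Pr[X ≤ τ] = E[1 - e^{-Sτ}]`, then `Pr[X ≤ τ] ≥ 1 - e^{-vτ(1 - τT/2)}`. -/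
theorem sum_stochastic_seed_cdf_lower'
    {Ω : Type*} [MeasureSpace Ω] [IsProbabilityMeasure (ℙ : Measure Ω)]
    (T v : ℝ) (hT : 0 < T)
    (r : ℕ) (S : Fin r → Ω → ℝ)
    (hindep : ProbabilityTheory.iIndepFun S ℙ)
    (hmeas : ∀ i, Measurable (S i))
    (hS0 : ∀ i ω, 0 ≤ S i ω) (hST : ∀ i ω, S i ω ≤ T)
    (hv : ∫ ω, (∑ i, S i ω) = v)
    (τ : ℝ) (hτ : 0 ≤ τ) :
    ∫ ω, (1 - Real.exp (-((∑ i, S i ω) * τ)))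
      ≥ 1 - Real.exp (-(v * τ * (1 - τ * T / 2))) :=
  sum_stochastic_seed_cdf_lower'_general T v r S hindep hmeas hS0 hST hv τ hτ
end

section
/- Fix a key x with weight f_x > 0 in a bottom-k sample (k ≥ 2) where each key z independently draws seed(z) from a distribution SeedDist_z with continuous CDF positive on (0,∞). Define τ_x as the (k-1)-th smallest seed among keys other than x, and the estimator f̂_x = f_x / Pr_{s~SeedDist_x}[s < τ_x] if seed(x) < τ_x, else f̂_x = 0. Then E[f̂_x] = f_x. -/
/-!
Let `F t = Pr_{s ~ SeedDist x}[s < t]`. The threshold `τ_x` is a measurable function of the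
seeds of the keys other than `x`, so it is independent of `seed x`, and the pair
`(seed x, τ_x)` has the product law. Integrating first over `seed x` at fixed `τ_x = t` gives
`F t · f / F t = f` whenever `F t ≠ 0`, and this holds almost surely because `τ_x` is one of
the seeds, which are almost surely positive.
-/

open MeasureTheory
open scoped ProbabilityTheory

/-- The `j`-th smallest element (1-indexed) of a multiset of reals. -/
noncomputable def orderStat (j : ℕ) (s : Multiset ℝ) : ℝ :=
  (s.sort (· ≤ ·)).getD (j - 1) 0

open Set ProbabilityTheory

lemma List.Pairwise.getElem_le_iff_lt_countP {α : Type*} [LinearOrder α] {l : List α}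
    (hl : l.Pairwise (· ≤ ·)) {i : ℕ} (hi : i < l.length) (t : α) :
    l[i] ≤ t ↔ i < l.countP (· ≤ t) := by
  have hsplit : l = l.take i ++ l[i] :: l.drop (i + 1) := by
    rw [List.getElem_cons_drop, List.take_append_drop]
  have hcount : l.countP (· ≤ t) = (l.take i).countP (· ≤ t)
      + (l.drop (i + 1)).countP (· ≤ t) + if l[i] ≤ t then 1 else 0 := by
    conv_lhs => rw [hsplit]
    simp only [List.countP_append, List.countP_cons, decide_eq_true_eq]
    omega
  rw [hsplit, List.pairwise_append, List.pairwise_cons] at hl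
  obtain ⟨-, ⟨hafter, -⟩, hbefore⟩ := hl
  have htake : (l.take i).length = i := List.length_take_of_le hi.le
  rw [hcount]
  constructor
  · intro hle
    have : (l.take i).countP (· ≤ t) = i := by
      rw [List.countP_eq_length.2 fun a ha => ?_, htake]
      simpa using (hbefore a ha _ List.mem_cons_self).trans hle
    simp [this, hle]
  · intro hlt
    by_contra hgt
    have : (l.drop (i + 1)).countP (· ≤ t) = 0 := by
      rw [List.countP_eq_zero]
      intro a ha
      simpa using (lt_of_not_ge hgt).trans_le (hafter a ha)
    have := htake ▸ (l.take i).countP_le_length (p := (· ≤ t))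
    simp only [hgt, if_false] at hlt
    omega

lemma orderStat_eq_getElem {s : Multiset ℝ} {j : ℕ} (hj : j - 1 < Multiset.card s) :
    orderStat j s = (s.sort (· ≤ ·))[j - 1]'(by rwa [Multiset.length_sort]) := by
  rw [orderStat, List.getD_eq_getElem?_getD, List.getElem?_eq_getElem, Option.getD_some]

lemma orderStat_mem {s : Multiset ℝ} {j : ℕ} (hj : j - 1 < Multiset.card s) :
    orderStat j s ∈ s := by
  rw [orderStat_eq_getElem hj, ← Multiset.mem_sort (· ≤ ·)]
  exact List.getElem_mem _

lemma orderStat_le_iff {s : Multiset ℝ} {j : ℕ} (hj₀ : 1 ≤ j) (hj : j ≤ Multiset.card s)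
    (t : ℝ) : orderStat j s ≤ t ↔ j ≤ s.countP (· ≤ t) := by
  have hj' : j - 1 < Multiset.card s := by omega
  conv_rhs => rw [← Multiset.sort_eq s (· ≤ ·), Multiset.coe_countP]
  rw [orderStat_eq_getElem hj', (Multiset.pairwise_sort s _).getElem_le_iff_lt_countP]
  omega

lemma measurable_orderStat {β κ : Type*} [MeasurableSpace β] (s : Finset κ) {v : κ → β → ℝ}
    (hv : ∀ z, Measurable (v z)) {j : ℕ} (hj₀ : 1 ≤ j) (hj : j ≤ s.card) :
    Measurable fun b => orderStat j (s.val.map fun z => v z b) := by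
  refine measurable_of_Iic fun t => ?_
  have hpre : (fun b => orderStat j (s.val.map fun z => v z b)) ⁻¹' Iic t
      = (fun b => ∑ z ∈ s, if v z b ≤ t then 1 else 0) ⁻¹' Ici j := by
    ext b
    simp only [mem_preimage, mem_Iic, mem_Ici]
    rw [orderStat_le_iff hj₀ (by simpa using hj), Multiset.countP_map, ← Finset.card_filter]
    rfl
  rw [hpre]
  exact (Finset.measurable_sum s fun z _ =>
    Measurable.ite (hv z measurableSet_Iic) measurable_const measurable_const) measurableSet_Ici

lemma ProbabilityTheory.iIndepFun.indepFun_comp_finset_of_notMem {Ω ι β γ : Type*}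
    [MeasurableSpace Ω] [MeasurableSpace β] [MeasurableSpace γ] {P : Measure Ω}
    {X : ι → Ω → β} (hindep : iIndepFun X P) (hX : ∀ i, Measurable (X i))
    {S : Finset ι} {x : ι} (hx : x ∉ S) {g : (S → β) → γ} (hg : Measurable g) :
    IndepFun (X x) (fun ω => g fun i => X i ω) P :=
  (hindep.indepFun_finset {x} S (Finset.disjoint_singleton_left.2 hx) hX).comp
    (measurable_pi_apply (⟨x, Finset.mem_singleton_self x⟩ : ({x} : Finset ι))) hg

lemma integral_ite_lt_div_measure_Iio {μ : Measure ℝ} [IsFiniteMeasure μ] {t : ℝ}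
    (ht : μ (Iio t) ≠ 0) (c : ℝ) :
    ∫ s, (if s < t then c / (μ (Iio t)).toReal else 0) ∂μ = c := by
  change ∫ s, (Iio t).indicator (fun _ => c / μ.real (Iio t)) s ∂μ = c
  rw [integral_indicator_const _ measurableSet_Iio, smul_eq_mul,
    mul_div_cancel₀ _ ((measureReal_ne_zero_iff (measure_ne_top _ _)).2 ht)]

lemma ProbabilityTheory.IndepFun.integral_ite_lt_div_measure_Iio {Ω : Type*}
    [MeasurableSpace Ω] {P : Measure Ω} [IsProbabilityMeasure P] {X Y : Ω → ℝ}
    (hXY : IndepFun X Y P) (hX : AEMeasurable X P) (hY : AEMeasurable Y P) {μ : Measure ℝ}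
    (hμ : P.map X = μ) (hpos : ∀ᵐ ω ∂P, μ (Iio (Y ω)) ≠ 0) (c : ℝ) :
    ∫ ω, (if X ω < Y ω then c / (μ (Iio (Y ω))).toReal else 0) ∂P = c := by
  subst hμ
  set μ := P.map X
  set ν := P.map Y
  have : IsProbabilityMeasure ν := Measure.isProbabilityMeasure_map hY
  let h : ℝ × ℝ → ℝ := fun p => if p.1 < p.2 then c / (μ (Iio p.2)).toReal else 0
  have hF : Measurable fun t => μ (Iio t) :=
    Monotone.measurable fun s t hst => measure_mono (Iio_subset_Iio hst)
  have hh : Measurable h := Measurable.ite (measurableSet_lt measurable_fst measurable_snd)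
    (measurable_const.div (hF.ennreal_toReal.comp measurable_snd)) measurable_const
  have hposν : ∀ᵐ t ∂ν, μ (Iio t) ≠ 0 :=
    (ae_map_iff hY (hF (measurableSet_singleton 0).compl)).2 hpos
  have hjoint : P.map (fun ω => (X ω, Y ω)) = μ.prod ν :=
    (indepFun_iff_map_prod_eq_prod_map_map hX hY).1 hXY
  have hint : Integrable h (μ.prod ν) := by
    refine (integrable_prod_iff' hh.aestronglyMeasurable).2
      ⟨ae_of_all _ fun t => ?_, (integrable_const |c|).congr ?_⟩
    · change Integrable ((Iio t).indicator fun _ => c / (μ (Iio t)).toReal) μ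
      exact (integrable_const _).indicator measurableSet_Iio
    · filter_upwards [hposν] with t ht
      -- every fibre integral of `‖h‖` is `|c|`
      rw [← _root_.integral_ite_lt_div_measure_Iio ht |c|]
      congr 1 with s
      split_ifs with hst <;> simp [h, hst]
  calc ∫ ω, h (X ω, Y ω) ∂P
      = ∫ p, h p ∂(μ.prod ν) := by
        rw [← hjoint, integral_map (hX.prodMk hY) hh.aestronglyMeasurable]
    _ = ∫ t, ∫ s, h (s, t) ∂μ ∂ν := integral_prod_symm h hint
    _ = ∫ _, c ∂ν := integral_congr_ae <|
        hposν.mono fun t ht => _root_.integral_ite_lt_div_measure_Iio ht c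
    _ = c := by simp

theorem bottomk_inverse_probability_unbiased_general
    {Ω : Type*} [MeasureSpace Ω] [IsProbabilityMeasure (ℙ : Measure Ω)]
    {ι : Type*} [Fintype ι] [DecidableEq ι]
    (k : ℕ) (hk : 2 ≤ k) (hcard : k ≤ Fintype.card ι)
    (seed : ι → Ω → ℝ) (hmeas : ∀ z, Measurable (seed z))
    (hindep : ProbabilityTheory.iIndepFun seed ℙ)
    (SeedDist : ι → Measure ℝ)
    (hlaw : ∀ z, Measure.map (seed z) ℙ = SeedDist z)
    (hpos : ∀ z, ∀ t : ℝ, 0 < t → 0 < (SeedDist z) (Set.Iio t))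
    (hsupp : ∀ z, (SeedDist z) (Set.Iic 0) = 0)
    (x : ι) (f : ℝ) :
    ∫ ω,
        (if seed x ω <
            orderStat (k - 1) ((Finset.univ.erase x).val.map fun z => seed z ω) then
          f / ((SeedDist x) (Set.Iio
            (orderStat (k - 1) ((Finset.univ.erase x).val.map fun z => seed z ω)))).toReal
        else 0)
      = f := by
  set S := Finset.univ.erase x
  have hj₀ : 1 ≤ k - 1 := by omega
  have hj : k - 1 ≤ S.card := by
    rw [Finset.card_erase_of_mem (Finset.mem_univ x), Finset.card_univ]; omega
  set τ : Ω → ℝ := fun ω => orderStat (k - 1) (S.val.map fun z => seed z ω)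
  have hτ_indep : IndepFun (seed x) τ ℙ := by
    have hg := measurable_orderStat S.attach (fun i => measurable_pi_apply i) hj₀
      (by rwa [Finset.card_attach])
    have hτ : τ = fun ω => orderStat (k - 1) (S.attach.val.map fun i : S => seed i ω) := by
      funext ω
      exact congrArg (orderStat (k - 1)) (Multiset.attach_map_val' S.val (seed · ω)).symm
    rw [hτ]
    exact hindep.indepFun_comp_finset_of_notMem hmeas (Finset.notMem_erase x _) hg
  have hseed_pos : ∀ᵐ ω ∂ℙ, ∀ z, 0 < seed z ω := ae_all_iff.2 fun z =>
    (ae_map_iff (hmeas z).aemeasurable measurableSet_Ioi).1 <| by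
      rw [hlaw z, ae_iff]; simp only [not_lt]; exact hsupp z
  have hτ_pos : ∀ᵐ ω ∂ℙ, SeedDist x (Iio (τ ω)) ≠ 0 := by
    filter_upwards [hseed_pos] with ω hω
    obtain ⟨z, -, hz⟩ := Multiset.mem_map.1 (orderStat_mem (s := S.val.map fun z => seed z ω)
      (j := k - 1) (by rw [Multiset.card_map, Finset.card_val]; omega))
    exact (hpos x _ (hz ▸ hω z : 0 < orderStat _ _)).ne'
  exact hτ_indep.integral_ite_lt_div_measure_Iio (hmeas x).aemeasurable
    (measurable_orderStat S hmeas hj₀ hj).aemeasurable (hlaw x) hτ_pos f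

/-- Unbiasedness of the conditioned inverse-probability (Horvitz–Thompson) estimator in a
bottom-`k` sample: each key `z` independently draws `seed z` from `SeedDist z` (continuous
CDF, positive on `(0,∞)`); `τ_x` is the `(k-1)`-th smallest seed among keys other than `x`;
the estimator is `f_x / Pr_{s ~ SeedDist x}[s < τ_x]` if `seed x < τ_x` and `0` otherwise.
Its expectation is `f_x`. -/
theorem bottomk_inverse_probability_unbiased
    {Ω : Type*} [MeasureSpace Ω] [IsProbabilityMeasure (ℙ : Measure Ω)]
    {ι : Type*} [Fintype ι] [DecidableEq ι]
    (k : ℕ) (hk : 2 ≤ k) (hcard : k ≤ Fintype.card ι)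
    (seed : ι → Ω → ℝ) (hmeas : ∀ z, Measurable (seed z))
    (hindep : ProbabilityTheory.iIndepFun seed ℙ)
    (SeedDist : ι → Measure ℝ) (hprob : ∀ z, IsProbabilityMeasure (SeedDist z))
    (hlaw : ∀ z, Measure.map (seed z) ℙ = SeedDist z)
    (hcont : ∀ z, Continuous fun t : ℝ => ((SeedDist z) (Set.Iio t)).toReal)
    (hpos : ∀ z, ∀ t : ℝ, 0 < t → 0 < (SeedDist z) (Set.Iio t))
    (hsupp : ∀ z, (SeedDist z) (Set.Iic 0) = 0)
    (x : ι) (f : ℝ) (hf : 0 < f) :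
    ∫ ω,
        (if seed x ω <
            orderStat (k - 1) ((Finset.univ.erase x).val.map fun z => seed z ω) then
          f / ((SeedDist x) (Set.Iio
            (orderStat (k - 1) ((Finset.univ.erase x).val.map fun z => seed z ω)))).toReal
        else 0)
      = f :=
  bottomk_inverse_probability_unbiased_general k hk hcard seed hmeas hindep SeedDist hlaw hpos hsupp
    x f
end

section
/- Let each key x ∈ X have random weight S_x = Σ_{i=1}^{r_x} S_{x,i}, a sum of independent random variables in [0,T], with v_x = E[S_x] and V = Σ_x v_x. In a stochastic PPSWOR sample of size 1 (the key with smallest seed, seed(x) ~ Exp(S_x) conditionally on S_x, all independent), if 0 < ε ≤ 1/2 and V ≥ (1/ε)·ln(1/ε)·T, then each key x is selected with probability at least (1 - 2ε)·v_x/V. -/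
/-!
Condition on the seed `X` of `x`. The other seeds are independent of `X`, and each exceeds `s`
with probability `E[exp (-s S_z)] ≥ exp (-s v_z)` (Jensen), so `x` is selected with probability
at least `E[exp (-c X)]` for any `c ≥ V - v_x`; we take `c = V - v_x + T/4 > 0`. Then
`E[exp (-c X)]` is the probability that `X` does not exceed an independent `Exp(c)` variable,
and this race probability equals `E[S_x / (S_x + c)]`.

Write `S_x = Σ_i S_{x,i}` and `R_i = S_x - S_{x,i}`. Since `S_{x,i} ≤ T` and `R_i` is independent
of `S_{x,i}`, `E[S_{x,i} / (S_x + c)] ≥ E[S_{x,i}] · E[1 / (T + c + R_i)]`, and Jensen for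
`y ↦ 1/y` bounds this below by `E[S_{x,i}] / (T + c + v_x)`. Summing over `i` gives
`E[S_x / (S_x + c)] ≥ v_x / (V + 5T/4)`, and `ε V ≥ log (1/ε) T ≥ log 2 · T` makes this at least
`(1 - 2ε) v_x / V`.
-/

open MeasureTheory ProbabilityTheory Set Real
open scoped ENNReal

section ExpMeasure
variable {c : ℝ}

lemma lintegral_expMeasure (g : ℝ → ℝ≥0∞) :
    ∫⁻ t, g t ∂expMeasure c = ∫⁻ t in Ici 0, ENNReal.ofReal (c * exp (-(c * t))) * g t := by
  have hpdf : Measurable (gammaPDF 1 c) := (measurable_exponentialPDFReal c).ennreal_ofReal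
  rw [expMeasure, gammaMeasure, lintegral_withDensity_eq_lintegral_mul_non_measurable _ hpdf
    (ae_of_all _ fun _ => ENNReal.ofReal_lt_top),
    ← lintegral_indicator measurableSet_Ici]
  refine lintegral_congr fun t => ?_
  change exponentialPDF c t * g t = _
  by_cases ht : 0 ≤ t
  · simp [exponentialPDF_of_nonneg ht, indicator_of_mem (show t ∈ Ici 0 from ht)]
  · simp [exponentialPDF_of_neg (not_le.1 ht), indicator_of_notMem (show t ∉ Ici 0 from ht)]

lemma integral_Ioi_exp_neg_mul {b : ℝ} (hb : 0 < b) (u : ℝ) :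
    ∫ t in Ioi u, exp (-(b * t)) = exp (-(b * u)) / b := by
  have := integral_exp_mul_Ioi (neg_neg_of_pos hb) u
  simp only [neg_mul, div_neg, neg_div] at this ⊢
  rw [this]; ring

lemma integral_Ici_mul_exp_neg_mul (hc : 0 < c) (u : ℝ) :
    ∫ t in Ici u, c * exp (-(c * t)) = exp (-(c * u)) := by
  rw [integral_Ici_eq_integral_Ioi, integral_const_mul, integral_Ioi_exp_neg_mul hc]
  field_simp

lemma integrableOn_Ici_mul_exp_neg_mul (hc : 0 < c) (u : ℝ) :
    IntegrableOn (fun t => c * exp (-(c * t))) (Ici u) := by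
  rw [integrableOn_Ici_iff_integrableOn_Ioi]
  have h : IntegrableOn (fun t => exp (-(c * t))) (Ioi u) := by
    simpa only [neg_mul] using exp_neg_integrableOn_Ioi u hc
  exact h.const_mul c

lemma expMeasure_ofReal_le_ofReal_le (hc : 0 < c) (u : ℝ) :
    expMeasure c {t | ENNReal.ofReal u ≤ ENNReal.ofReal t} ≤ ENNReal.ofReal (exp (-(c * u))) := by
  have hmeas : MeasurableSet {t | ENNReal.ofReal u ≤ ENNReal.ofReal t} :=
    measurableSet_le measurable_const ENNReal.measurable_ofReal
  have hpoint : ∀ t ∈ Ici (0 : ℝ), ENNReal.ofReal (c * exp (-(c * t))) *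
      {t | ENNReal.ofReal u ≤ ENNReal.ofReal t}.indicator 1 t ≤
      (Ici u).indicator (fun t => ENNReal.ofReal (c * exp (-(c * t)))) t := by
    intro t (ht : 0 ≤ t)
    by_cases hut : ENNReal.ofReal u ≤ ENNReal.ofReal t
    · have : u ≤ t := (ENNReal.ofReal_le_ofReal_iff'.1 hut).elim id (·.trans ht)
      simp [indicator_of_mem (show t ∈ {t | ENNReal.ofReal u ≤ ENNReal.ofReal t} from hut),
        indicator_of_mem (show t ∈ Ici u from this)]
    · simp [indicator_of_notMem (show t ∉ {t | ENNReal.ofReal u ≤ ENNReal.ofReal t} from hut)]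
  rw [← lintegral_indicator_one hmeas, lintegral_expMeasure]
  calc ∫⁻ t in Ici 0, ENNReal.ofReal (c * exp (-(c * t))) *
        {t | ENNReal.ofReal u ≤ ENNReal.ofReal t}.indicator 1 t
      ≤ ∫⁻ t in Ici 0, (Ici u).indicator (fun t => ENNReal.ofReal (c * exp (-(c * t)))) t :=
        setLIntegral_mono' measurableSet_Ici hpoint
    _ ≤ ∫⁻ t, (Ici u).indicator (fun t => ENNReal.ofReal (c * exp (-(c * t)))) t :=
        setLIntegral_le_lintegral _ _
    _ = ENNReal.ofReal (∫ t in Ici u, c * exp (-(c * t))) := by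
        rw [lintegral_indicator measurableSet_Ici, ofReal_integral_eq_lintegral_ofReal
          (integrableOn_Ici_mul_exp_neg_mul hc u) (ae_of_all _ fun t => by positivity)]
    _ = ENNReal.ofReal (exp (-(c * u))) := by rw [integral_Ici_mul_exp_neg_mul hc]

lemma lintegral_one_sub_exp_expMeasure (hc : 0 < c) {s : ℝ} (hs : 0 ≤ s) :
    ∫⁻ t, ENNReal.ofReal (1 - exp (-(s * t))) ∂expMeasure c = ENNReal.ofReal (s / (s + c)) := by
  have hsc : 0 < s + c := by linarith
  have hsplit : ∀ t, c * exp (-(c * t)) * (1 - exp (-(s * t))) =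
      c * exp (-(c * t)) - c / (s + c) * ((s + c) * exp (-((s + c) * t))) := fun t => by
    have : exp (-((s + c) * t)) = exp (-(c * t)) * exp (-(s * t)) := by
      rw [← exp_add]; ring_nf
    rw [this]; field_simp
  have hnonneg : ∀ t ∈ Ici (0 : ℝ), 0 ≤ c * exp (-(c * t)) * (1 - exp (-(s * t))) :=
    fun t (ht : 0 ≤ t) => mul_nonneg (by positivity)
      (sub_nonneg.2 (exp_le_one_iff.2 (neg_nonpos.2 (mul_nonneg hs ht))))
  rw [lintegral_expMeasure]
  calc ∫⁻ t in Ici 0, ENNReal.ofReal (c * exp (-(c * t))) * ENNReal.ofReal (1 - exp (-(s * t)))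
      = ∫⁻ t in Ici 0, ENNReal.ofReal (c * exp (-(c * t)) * (1 - exp (-(s * t)))) :=
        lintegral_congr fun t => (ENNReal.ofReal_mul (by positivity)).symm
    _ = ENNReal.ofReal (∫ t in Ici 0, c * exp (-(c * t)) * (1 - exp (-(s * t)))) := by
        rw [ofReal_integral_eq_lintegral_ofReal]
        · simp_rw [hsplit]
          exact (integrableOn_Ici_mul_exp_neg_mul hc 0).sub
            ((integrableOn_Ici_mul_exp_neg_mul hsc 0).const_mul _)
        · exact (ae_restrict_iff' measurableSet_Ici).2 (ae_of_all _ hnonneg)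
    _ = ENNReal.ofReal (s / (s + c)) := by
        simp_rw [hsplit]
        rw [integral_sub (integrableOn_Ici_mul_exp_neg_mul hc 0)
          ((integrableOn_Ici_mul_exp_neg_mul hsc 0).const_mul _), integral_const_mul (c / (s + c)),
          integral_Ici_mul_exp_neg_mul hc, integral_Ici_mul_exp_neg_mul hsc, mul_zero, mul_zero,
          neg_zero, exp_zero]
        congr 1
        field_simp
        ring

end ExpMeasure

section MeanBound
variable {Ω : Type*} [MeasurableSpace Ω] {μ : Measure Ω} [IsProbabilityMeasure μ]

lemma inv_add_integral_le_integral_inv_add {R : Ω → ℝ} (hR : Integrable R μ)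
    (hR0 : ∀ ω, 0 ≤ R ω) {k : ℝ} (hk : 0 < k) :
    (k + ∫ ω, R ω ∂μ)⁻¹ ≤ ∫ ω, (k + R ω)⁻¹ ∂μ := by
  have hconv : ConvexOn ℝ (Ici k) fun y : ℝ => y⁻¹ := by
    simpa using (convexOn_zpow (𝕜 := ℝ) (-1)).subset (Ici_subset_Ioi.2 hk) (convex_Ici k)
  have := hconv.map_integral_le (f := fun ω => k + R ω) (μ := μ)
    (continuousOn_inv₀.mono fun y (hy : k ≤ y) => (hk.trans_le hy).ne')
    isClosed_Ici (ae_of_all _ fun ω => by simp [hR0 ω]) ((integrable_const k).add hR)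
    (.of_mem_Icc 0 k⁻¹ (hR.aemeasurable.const_add k).inv (ae_of_all _ fun ω =>
      ⟨inv_nonneg.2 (by linarith [hR0 ω]), inv_anti₀ hk (by linarith [hR0 ω])⟩))
  simpa [integral_add (integrable_const k) hR] using this

lemma exp_neg_integral_mul_le_integral_exp {Z : Ω → ℝ} (hZ : Integrable Z μ) (t : ℝ)
    (hexp : Integrable (fun ω => exp (-(Z ω * t))) μ) :
    exp (-((∫ ω, Z ω ∂μ) * t)) ≤ ∫ ω, exp (-(Z ω * t)) ∂μ := by
  have := convexOn_exp.map_integral_le (f := fun ω => -(Z ω * t)) (μ := μ)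
    continuous_exp.continuousOn isClosed_univ (ae_of_all _ fun _ => mem_univ _)
    (hZ.mul_const t).neg hexp
  simpa [integral_neg, integral_mul_const] using this

lemma integral_mul_inv_le_integral_div_add {X R : Ω → ℝ} (hX : Measurable X) (hR : Measurable R)
    (hXR : IndepFun X R μ) {T c : ℝ} (hc : 0 < c) (hX0 : ∀ ω, 0 ≤ X ω) (hXT : ∀ ω, X ω ≤ T)
    (hR0 : ∀ ω, 0 ≤ R ω) (hRi : Integrable R μ) :
    (∫ ω, X ω ∂μ) * (T + c + ∫ ω, R ω ∂μ)⁻¹ ≤ ∫ ω, X ω / (X ω + R ω + c) ∂μ := by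
  obtain ⟨ω₀⟩ : Nonempty Ω := nonempty_of_isProbabilityMeasure μ
  have hTc : 0 < T + c := by linarith [hX0 ω₀, hXT ω₀]
  have hpoint : ∀ ω, X ω * (T + c + R ω)⁻¹ ≤ X ω / (X ω + R ω + c) := fun ω => by
    rw [← div_eq_mul_inv]
    exact div_le_div_of_nonneg_left (hX0 ω) (by linarith [hX0 ω, hR0 ω]) (by linarith [hXT ω])
  have hdiv_le_one : ∀ ω, X ω / (X ω + R ω + c) ≤ 1 := fun ω =>
    div_le_one_of_le₀ (by linarith [hR0 ω]) (by linarith [hX0 ω, hR0 ω])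
  have hprod_nonneg : ∀ ω, 0 ≤ X ω * (T + c + R ω)⁻¹ := fun ω =>
    mul_nonneg (hX0 ω) (inv_nonneg.2 (by linarith [hR0 ω]))
  calc (∫ ω, X ω ∂μ) * (T + c + ∫ ω, R ω ∂μ)⁻¹
      ≤ (∫ ω, X ω ∂μ) * ∫ ω, (T + c + R ω)⁻¹ ∂μ :=
        mul_le_mul_of_nonneg_left (inv_add_integral_le_integral_inv_add hRi hR0 hTc)
          (integral_nonneg hX0)
    _ = ∫ ω, X ω * (T + c + R ω)⁻¹ ∂μ :=
        (hXR.integral_fun_comp_mul_comp (f := id) (g := fun r => (T + c + r)⁻¹)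
          hX.aemeasurable hR.aemeasurable aestronglyMeasurable_id
          (measurable_const.add measurable_id).inv.aestronglyMeasurable).symm
    _ ≤ ∫ ω, X ω / (X ω + R ω + c) ∂μ :=
        integral_mono
          (.of_mem_Icc 0 1 (by fun_prop)
            (ae_of_all _ fun ω => ⟨hprod_nonneg ω, (hpoint ω).trans (hdiv_le_one ω)⟩))
          (.of_mem_Icc 0 1 (hX.div ((hX.add hR).add_const c)).aemeasurable
            (ae_of_all _ fun ω => ⟨(hprod_nonneg ω).trans (hpoint ω), hdiv_le_one ω⟩))
          hpoint

lemma div_le_integral_sum_div_sum_add {ι : Type*} [Fintype ι] {f : ι → Ω → ℝ}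
    (hf : ∀ i, Measurable (f i)) (hind : iIndepFun f μ) {T c : ℝ} (hc : 0 < c)
    (h0 : ∀ i ω, 0 ≤ f i ω) (hfT : ∀ i ω, f i ω ≤ T) :
    (∑ i, ∫ ω, f i ω ∂μ) / (∑ i, ∫ ω, f i ω ∂μ + c + T) ≤
      ∫ ω, (∑ i, f i ω) / (∑ i, f i ω + c) ∂μ := by
  classical
  obtain ⟨ω₀⟩ : Nonempty Ω := nonempty_of_isProbabilityMeasure μ
  set v := ∑ i, ∫ ω, f i ω ∂μ
  have hint : ∀ i, Integrable (f i) μ := fun i =>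
    .of_mem_Icc 0 T (hf i).aemeasurable (ae_of_all _ fun ω => ⟨h0 i ω, hfT i ω⟩)
  have hterm : ∀ i, (∫ ω, f i ω ∂μ) / (v + c + T) ≤ ∫ ω, f i ω / (∑ j, f j ω + c) ∂μ := by
    intro i
    set R := fun ω => ∑ j ∈ Finset.univ.erase i, f j ω
    have hR0 : ∀ ω, 0 ≤ R ω := fun ω => Finset.sum_nonneg fun j _ => h0 j ω
    have hRint : Integrable R μ := integrable_finsetSum _ fun j _ => hint j
    have hRle : ∫ ω, R ω ∂μ ≤ v := by
      rw [integral_finsetSum _ fun j _ => hint j]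
      exact Finset.sum_le_sum_of_subset_of_nonneg (Finset.erase_subset _ _)
        fun j _ _ => integral_nonneg (h0 j)
    have hsplit : ∀ ω, ∑ j, f j ω = f i ω + R ω := fun ω =>
      (Finset.add_sum_erase Finset.univ (fun j => f j ω) (Finset.mem_univ i)).symm
    have hTc : 0 < T + c + ∫ ω, R ω ∂μ := by
      linarith [h0 i ω₀, hfT i ω₀, (integral_nonneg hR0 : 0 ≤ ∫ ω, R ω ∂μ)]
    calc (∫ ω, f i ω ∂μ) / (v + c + T) = (∫ ω, f i ω ∂μ) * (T + c + v)⁻¹ := by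
          rw [div_eq_mul_inv]; congr 2; ring
      _ ≤ (∫ ω, f i ω ∂μ) * (T + c + ∫ ω, R ω ∂μ)⁻¹ :=
          mul_le_mul_of_nonneg_left (inv_anti₀ hTc (by linarith)) (integral_nonneg (h0 i))
      _ ≤ ∫ ω, f i ω / (f i ω + R ω + c) ∂μ :=
          integral_mul_inv_le_integral_div_add (hf i)
            (Finset.measurable_sum _ fun j _ => hf j)
            (by simpa only [Finset.sum_fn] using
              (hind.indepFun_finsetSum_of_notMem hf (Finset.notMem_erase i _)).symm)
            hc (h0 i) (hfT i)
            hR0 hRint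
      _ = ∫ ω, f i ω / (∑ j, f j ω + c) ∂μ := by simp_rw [hsplit]
  have hle_sum : ∀ i ω, f i ω ≤ ∑ j, f j ω := fun i ω =>
    Finset.single_le_sum (fun j _ => h0 j ω) (Finset.mem_univ i)
  have hdiv_int : ∀ i, Integrable (fun ω => f i ω / (∑ j, f j ω + c)) μ := fun i =>
    .of_mem_Icc 0 1
      ((hf i).div ((Finset.measurable_sum _ fun j _ => hf j).add_const c)).aemeasurable
      (ae_of_all _ fun ω => ⟨div_nonneg (h0 i ω) (by linarith [h0 i ω, hle_sum i ω]),
        div_le_one_of_le₀ (by linarith [hle_sum i ω]) (by linarith [h0 i ω, hle_sum i ω])⟩)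
  calc v / (v + c + T) = ∑ i, (∫ ω, f i ω ∂μ) / (v + c + T) := Finset.sum_div _ _ _
    _ ≤ ∑ i, ∫ ω, f i ω / (∑ j, f j ω + c) ∂μ := Finset.sum_le_sum fun i _ => hterm i
    _ = ∫ ω, (∑ i, f i ω) / (∑ i, f i ω + c) ∂μ := by
        rw [← integral_finsetSum _ fun i _ => hdiv_int i]
        simp_rw [Finset.sum_div]

end MeanBound

section Race
variable {Ω : Type*} [MeasurableSpace Ω] {μ : Measure Ω} [IsProbabilityMeasure μ]
  {X : Ω → ℝ≥0∞} {S : Ω → ℝ}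

lemma measure_le_ofReal_eq_lintegral_one_sub_exp (hX : Measurable X) (hS : Measurable S)
    (hS0 : ∀ ω, 0 ≤ S ω) {t : ℝ} (ht : 0 ≤ t)
    (htail : μ {ω | ENNReal.ofReal t < X ω} = ENNReal.ofReal (∫ ω, exp (-(S ω * t)) ∂μ)) :
    μ {ω | X ω ≤ ENNReal.ofReal t} = ∫⁻ ω, ENNReal.ofReal (1 - exp (-(S ω * t))) ∂μ := by
  have hle_one : ∀ ω, exp (-(S ω * t)) ≤ 1 := fun ω =>
    exp_le_one_iff.2 (neg_nonpos.2 (mul_nonneg (hS0 ω) ht))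
  have hexp : Integrable (fun ω => exp (-(S ω * t))) μ :=
    .of_mem_Icc 0 1 (by fun_prop) (ae_of_all _ fun ω => ⟨(exp_pos _).le, hle_one ω⟩)
  have hcompl : {ω | X ω ≤ ENNReal.ofReal t} = {ω | ENNReal.ofReal t < X ω}ᶜ := by
    ext ω; simp
  rw [hcompl, prob_compl_eq_one_sub (measurableSet_lt measurable_const hX), htail,
    ← ofReal_integral_eq_lintegral_ofReal (f := fun ω => 1 - exp (-(S ω * t)))
      ((integrable_const 1).sub hexp) (ae_of_all _ fun ω => sub_nonneg.2 (hle_one ω)),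
    integral_sub (integrable_const 1) hexp,
    ENNReal.ofReal_sub _ (integral_nonneg fun ω => (exp_pos _).le)]
  simp

lemma lintegral_expMeasure_le_eq_ofReal_integral_div {c : ℝ} (hc : 0 < c) (hX : Measurable X)
    (hS : Measurable S) (hS0 : ∀ ω, 0 ≤ S ω)
    (htail : ∀ t, 0 ≤ t →
      μ {ω | ENNReal.ofReal t < X ω} = ENNReal.ofReal (∫ ω, exp (-(S ω * t)) ∂μ)) :
    ∫⁻ ω, expMeasure c {t | X ω ≤ ENNReal.ofReal t} ∂μ =
      ENNReal.ofReal (∫ ω, S ω / (S ω + c) ∂μ) := by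
  have := isProbabilityMeasure_expMeasure hc
  have hC : MeasurableSet {p : Ω × ℝ | X p.1 ≤ ENNReal.ofReal p.2} :=
    measurableSet_le (hX.comp measurable_fst) (ENNReal.measurable_ofReal.comp measurable_snd)
  have hdiv_nonneg : ∀ ω, 0 ≤ S ω / (S ω + c) := fun ω =>
    div_nonneg (hS0 ω) (by linarith [hS0 ω])
  calc ∫⁻ ω, expMeasure c {t | X ω ≤ ENNReal.ofReal t} ∂μ
      = ∫⁻ t, μ {ω | X ω ≤ ENNReal.ofReal t} ∂expMeasure c :=
        (Measure.prod_apply hC).symm.trans (Measure.prod_apply_symm hC)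
    _ = ∫⁻ t, ∫⁻ ω, ENNReal.ofReal (1 - exp (-(S ω * t))) ∂μ ∂expMeasure c := by
        rw [lintegral_expMeasure, lintegral_expMeasure]
        refine setLIntegral_congr_fun measurableSet_Ici fun t (ht : 0 ≤ t) => ?_
        rw [measure_le_ofReal_eq_lintegral_one_sub_exp hX hS hS0 ht (htail t ht)]
    _ = ∫⁻ ω, ∫⁻ t, ENNReal.ofReal (1 - exp (-(S ω * t))) ∂expMeasure c ∂μ :=
        lintegral_lintegral_swap (by fun_prop)
    _ = ∫⁻ ω, ENNReal.ofReal (S ω / (S ω + c)) ∂μ :=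
        lintegral_congr fun ω => lintegral_one_sub_exp_expMeasure hc (hS0 ω)
    _ = ENNReal.ofReal (∫ ω, S ω / (S ω + c) ∂μ) :=
        (ofReal_integral_eq_lintegral_ofReal
          (.of_mem_Icc 0 1 (hS.div (hS.add_const c)).aemeasurable (ae_of_all _ fun ω =>
            ⟨hdiv_nonneg ω, div_le_one_of_le₀ (by linarith [hS0 ω]) (by linarith [hS0 ω])⟩))
          (ae_of_all _ hdiv_nonneg)).symm

end Race

section Conditioning
variable {Ω α β : Type*} [MeasurableSpace Ω] {μ : Measure Ω} [IsFiniteMeasure μ]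
  [MeasurableSpace α] [MeasurableSpace β]

lemma ProbabilityTheory.IndepFun.measure_preimage_eq_lintegral {X : Ω → α} {Y : Ω → β}
    (hXY : IndepFun X Y μ) (hX : Measurable X) (hY : Measurable Y) {C : Set (α × β)}
    (hC : MeasurableSet C) :
    μ {ω | (X ω, Y ω) ∈ C} = ∫⁻ ω, μ {ω' | (X ω, Y ω') ∈ C} ∂μ := by
  change μ ((fun ω => (X ω, Y ω)) ⁻¹' C) = _
  rw [← Measure.map_apply (hX.prodMk hY) hC,
    (indepFun_iff_map_prod_eq_prod_map_map hX.aemeasurable hY.aemeasurable).1 hXY,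
    Measure.prod_apply hC, lintegral_map (measurable_measure_prodMk_left hC) hX]
  exact lintegral_congr fun ω => Measure.map_apply hY (measurable_prodMk_left hC)

lemma measure_forall_lt_eq_lintegral_prod {ι : Type*} [Fintype ι] [DecidableEq ι]
    [LinearOrder β] [TopologicalSpace β] [OrderClosedTopology β] [SecondCountableTopology β]
    [OpensMeasurableSpace β] {seed : ι → Ω → β} (hm : ∀ i, Measurable (seed i))
    (hind : iIndepFun seed μ) (x : ι) :
    μ {ω | ∀ z, z ≠ x → seed x ω < seed z ω} =
      ∫⁻ ω, ∏ z ∈ Finset.univ.erase x, μ {ω' | seed x ω < seed z ω'} ∂μ := by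
  set E := Finset.univ.erase x
  set Y : Ω → (E → β) := fun ω z => seed z ω
  have hY : Measurable Y := measurable_pi_lambda _ fun z => hm z
  have hXY : IndepFun (seed x) Y μ :=
    (hind.indepFun_finset {x} E (Finset.disjoint_singleton_left.2 (Finset.notMem_erase x _))
      hm).comp (measurable_pi_apply (⟨x, Finset.mem_singleton_self x⟩ : ({x} : Finset ι)))
      measurable_id
  have hC : MeasurableSet {p : β × (E → β) | ∀ z, p.1 < p.2 z} := by
    simp only [ofPred_forall]
    exact MeasurableSet.iInter fun z =>
      measurableSet_lt measurable_fst ((measurable_pi_apply z).comp measurable_snd)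
  have hevent : {ω | ∀ z, z ≠ x → seed x ω < seed z ω} =
      {ω | (seed x ω, Y ω) ∈ {p : β × (E → β) | ∀ z, p.1 < p.2 z}} := by
    ext ω
    simp [Y, E]
  rw [hevent, hXY.measure_preimage_eq_lintegral (hm x) hY hC]
  refine lintegral_congr fun ω => ?_
  rw [← hind.meas_biInter (s := fun z => {ω' | seed x ω < seed z ω'})
    fun z _ => ⟨Ioi (seed x ω), measurableSet_Ioi, rfl⟩]
  congr 1
  ext ω'
  simp [Y, E]

end Conditioning

section Selection
variable {Ω : Type*} [MeasurableSpace Ω] {μ : Measure Ω} [IsProbabilityMeasure μ]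

lemma ofReal_exp_neg_integral_mul_le_measure_lt {X : Ω → ℝ≥0∞} {S : Ω → ℝ}
    (hS : Integrable S μ) (hS0 : ∀ ω, 0 ≤ S ω) {t : ℝ} (ht : 0 ≤ t)
    (htail : μ {ω | ENNReal.ofReal t < X ω} = ENNReal.ofReal (∫ ω, exp (-(S ω * t)) ∂μ)) :
    ENNReal.ofReal (exp (-((∫ ω, S ω ∂μ) * t))) ≤ μ {ω | ENNReal.ofReal t < X ω} := by
  have hexp : Integrable (fun ω => exp (-(S ω * t))) μ :=
    .of_mem_Icc 0 1 (measurable_exp.comp_aemeasurable (hS.aemeasurable.mul_const t).neg)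
      (ae_of_all _ fun ω =>
        ⟨(exp_pos _).le, exp_le_one_iff.2 (neg_nonpos.2 (mul_nonneg (hS0 ω) ht))⟩)
  rw [htail]
  exact ENNReal.ofReal_le_ofReal (exp_neg_integral_mul_le_integral_exp hS t hexp)

lemma expMeasure_le_prod_measure_lt {ι : Type*} {E : Finset ι} {seed : ι → Ω → ℝ≥0∞}
    {S : ι → Ω → ℝ} (hS : ∀ z, Integrable (S z) μ) (hS0 : ∀ z ω, 0 ≤ S z ω)
    (htail : ∀ z t, 0 ≤ t →
      μ {ω | ENNReal.ofReal t < seed z ω} = ENNReal.ofReal (∫ ω, exp (-(S z ω * t)) ∂μ))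
    {c : ℝ} (hc : 0 < c) (hcE : ∑ z ∈ E, ∫ ω, S z ω ∂μ ≤ c) (s : ℝ≥0∞) :
    expMeasure c {t | s ≤ ENNReal.ofReal t} ≤ ∏ z ∈ E, μ {ω | s < seed z ω} := by
  rcases eq_or_ne s ⊤ with rfl | hs
  · simp
  obtain ⟨u, hu, rfl⟩ : ∃ u, 0 ≤ u ∧ s = ENNReal.ofReal u :=
    ⟨s.toReal, ENNReal.toReal_nonneg, (ENNReal.ofReal_toReal hs).symm⟩
  calc expMeasure c {t | ENNReal.ofReal u ≤ ENNReal.ofReal t}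
      ≤ ENNReal.ofReal (exp (-(c * u))) := expMeasure_ofReal_le_ofReal_le hc u
    _ ≤ ENNReal.ofReal (exp (-((∑ z ∈ E, ∫ ω, S z ω ∂μ) * u))) :=
        ENNReal.ofReal_le_ofReal (exp_le_exp.2 (neg_le_neg (mul_le_mul_of_nonneg_right hcE hu)))
    _ = ∏ z ∈ E, ENNReal.ofReal (exp (-((∫ ω, S z ω ∂μ) * u))) := by
        rw [← ENNReal.ofReal_prod_of_nonneg fun z _ => (exp_pos _).le, ← exp_sum,
          Finset.sum_mul, Finset.sum_neg_distrib]
    _ ≤ ∏ z ∈ E, μ {ω | ENNReal.ofReal u < seed z ω} :=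
        Finset.prod_le_prod' fun z _ =>
          ofReal_exp_neg_integral_mul_le_measure_lt (hS z) (hS0 z) hu (htail z u hu)

lemma ofReal_integral_div_add_le_measure_forall_lt {ι : Type*} [Fintype ι] [DecidableEq ι]
    {seed : ι → Ω → ℝ≥0∞} {S : ι → Ω → ℝ} (hseed : ∀ z, Measurable (seed z))
    (hind : iIndepFun seed μ) (x : ι) (hSx : Measurable (S x)) (hS : ∀ z, Integrable (S z) μ)
    (hS0 : ∀ z ω, 0 ≤ S z ω)
    (htail : ∀ z t, 0 ≤ t →
      μ {ω | ENNReal.ofReal t < seed z ω} = ENNReal.ofReal (∫ ω, exp (-(S z ω * t)) ∂μ))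
    {c : ℝ} (hc : 0 < c) (hcE : ∑ z ∈ Finset.univ.erase x, ∫ ω, S z ω ∂μ ≤ c) :
    ENNReal.ofReal (∫ ω, S x ω / (S x ω + c) ∂μ) ≤
      μ {ω | ∀ z, z ≠ x → seed x ω < seed z ω} := by
  rw [measure_forall_lt_eq_lintegral_prod hseed hind x,
    ← lintegral_expMeasure_le_eq_ofReal_integral_div hc (hseed x) hSx (hS0 x) (htail x)]
  exact lintegral_mono fun ω => expMeasure_le_prod_measure_lt hS hS0 htail hc hcE _

end Selection

lemma one_sub_two_mul_div_le_div_add {ε T V w : ℝ} (hT : 0 < T) (hε0 : 0 < ε) (hε : ε ≤ 1 / 2)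
    (hVT : (1 / ε) * log (1 / ε) * T ≤ V) (hw : 0 ≤ w) :
    (1 - 2 * ε) * w / V ≤ w / (V + 5 * T / 4) := by
  have hlog : log 2 ≤ log (1 / ε) :=
    log_le_log (by norm_num) (by rw [le_div_iff₀ hε0]; linarith)
  have hεV : log (1 / ε) * T ≤ ε * V := by
    have := mul_le_mul_of_nonneg_left hVT hε0.le
    rwa [← mul_assoc, ← mul_assoc, mul_one_div_cancel hε0.ne', one_mul] at this
  have hV : 0 < V := by
    have := log_two_gt_d9
    nlinarith
  have hslack : (1 - 2 * ε) * (V + 5 * T / 4) ≤ V := by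
    nlinarith [log_two_gt_d9, mul_le_mul_of_nonneg_right hlog hT.le]
  rw [div_le_div_iff₀ hV (by linarith)]
  nlinarith [mul_le_mul_of_nonneg_left hslack hw]

/-- Inclusion probability in a stochastic PPSWOR sample of size 1. Each key `x` has random
weight `S x = Σ_i S' x i`, a sum of independent random variables in `[0,T]`, with
`v x = E[S x]` and `V = Σ_x v x`. The seed of key `x` is `Exp(S x)`-distributed
conditionally on `S x` (with `Exp(0) = ∞`), the pairs `(S x, seed x)` being independent
across keys. If `0 < ε ≤ 1/2` and `V ≥ (1/ε)·ln(1/ε)·T`, then the key with the smallest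
seed is `x` with probability at least `(1 - 2ε)·v x / V`. -/
theorem stochastic_ppswor_inclusion_probability
    {Ω : Type*} [MeasureSpace Ω] [IsProbabilityMeasure (ℙ : Measure Ω)]
    {ι : Type*} [Fintype ι] [DecidableEq ι]
    (T ε : ℝ) (hT : 0 < T) (hε0 : 0 < ε) (hε : ε ≤ 1 / 2)
    (r : ι → ℕ) (S' : (x : ι) → Fin (r x) → Ω → ℝ)
    (hmeas : ∀ x i, Measurable (S' x i))
    (hS0 : ∀ x i ω, 0 ≤ S' x i ω) (hST : ∀ x i ω, S' x i ω ≤ T)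
    (hindepS : ProbabilityTheory.iIndepFun
      (fun p : Σ x : ι, Fin (r x) => S' p.1 p.2) ℙ)
    (S : ι → Ω → ℝ) (hS : ∀ x ω, S x ω = ∑ i, S' x i ω)
    (v : ι → ℝ) (hv : ∀ x, v x = ∫ ω, S x ω)
    (V : ℝ) (hV : V = ∑ x, v x)
    (hVT : V ≥ (1 / ε) * Real.log (1 / ε) * T)
    (seed : ι → Ω → ℝ≥0∞) (hseedmeas : ∀ x, Measurable (seed x))
    (hindep : ProbabilityTheory.iIndepFun
      (fun x ω => (S x ω, seed x ω)) ℙ)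
    (hcondlaw : ∀ x, ∀ t : ℝ, 0 ≤ t → ∀ A : Set ℝ, MeasurableSet A →
      ℙ {ω | ENNReal.ofReal t < seed x ω ∧ S x ω ∈ A}
        = ENNReal.ofReal (∫ ω in {ω | S x ω ∈ A}, Real.exp (-(S x ω * t))))
    (x : ι) :
    ℙ {ω | ∀ z, z ≠ x → seed x ω < seed z ω}
      ≥ ENNReal.ofReal ((1 - 2 * ε) * v x / V) := by
  have hSeq : ∀ z, S z = fun ω => ∑ i, S' z i ω := fun z => funext (hS z)
  have hS'int : ∀ z i, Integrable (S' z i) ℙ := fun z i =>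
    .of_mem_Icc 0 T (hmeas z i).aemeasurable (ae_of_all _ fun ω => ⟨hS0 z i ω, hST z i ω⟩)
  have hSnonneg : ∀ z ω, 0 ≤ S z ω := fun z ω =>
    hS z ω ▸ Finset.sum_nonneg fun i _ => hS0 z i ω
  have hv0 : ∀ z, 0 ≤ v z := fun z => hv z ▸ integral_nonneg (hSnonneg z)
  have hvx : v x ≤ V := hV ▸ Finset.single_le_sum (fun z _ => hv0 z) (Finset.mem_univ x)
  set c := V - v x + T / 4 with hc_def
  have hc : 0 < c := by linarith
  have hrest : ∑ z ∈ Finset.univ.erase x, ∫ ω, S z ω ≤ c := by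
    have := Finset.sum_erase_add Finset.univ v (Finset.mem_univ x)
    simp_rw [← hv]
    linarith [hV]
  have hmean : v x / (v x + c + T) ≤ ∫ ω, S x ω / (S x ω + c) := by
    have hvx_sum : v x = ∑ i, ∫ ω, S' x i ω := by
      rw [hv, hSeq, integral_finsetSum _ fun i _ => hS'int x i]
    simpa only [hvx_sum, ← hS] using div_le_integral_sum_div_sum_add (hmeas x)
      (hindepS.precomp (g := Sigma.mk x) sigma_mk_injective) hc (hS0 x) (hST x)
  have hwin := ofReal_integral_div_add_le_measure_forall_lt hseedmeas
    (hindep.comp (fun _ => Prod.snd) fun _ => measurable_snd) x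
    (hSeq x ▸ Finset.measurable_sum _ fun i _ => hmeas x i)
    (fun z => hSeq z ▸ integrable_finsetSum _ fun i _ => hS'int z i) hSnonneg
    (fun z t ht => by simpa using hcondlaw z t ht univ MeasurableSet.univ) hc hrest
  refine le_trans (ENNReal.ofReal_le_ofReal ?_) hwin
  calc (1 - 2 * ε) * v x / V ≤ v x / (V + 5 * T / 4) :=
        one_sub_two_mul_div_le_div_add hT hε0 hε hVT (hv0 x)
    _ = v x / (v x + c + T) := by rw [hc_def]; congr 1; ring
    _ ≤ ∫ ω, S x ω / (S x ω + c) := hmean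
end
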